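/- Existence of the balancing transmission probability for Gaussian inputs on AWGN links: let σ1, σ2, P1, P2 > 0 and for τ² > 0 let f_{τ²}(y) = (2πτ²)^{−1/2}·exp(−y²/(2τ²)) denote the density of a zero-mean Gaussian with variance τ². Define φ(λ) := −∫_ℝ ( λ·f_{P2+σ2²}(y) + (1 − λ)·f_{σ2²}(y) ) · log2( λ·f_{P2+σ2²}(y) + (1 − λ)·f_{σ2²}(y) ) dy − (1/2)·log2(2πe·σ2²) and ψ(λ) := (1/2)·log2(1 + P1/σ1²)·(1 − λ) for λ ∈ [0,1]. Then φ is continuous on [0,1], φ(0) = 0, φ(1) = (1/2)·log2(1 + P2/σ2²), and there exists λ ∈ (0,1) with ψ(λ) = φ(λ). -/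

import Mathlib

open MeasureTheory

/-- Density at `y` of a zero-mean Gaussian with variance `v`:
`(2πv)^{−1/2}·exp(−y²/(2v))`. -/
noncomputable def gpdf (v y : ℝ) : ℝ :=
  (Real.sqrt (2 * Real.pi * v))⁻¹ * Real.exp (-(y ^ 2) / (2 * v))

/-!
`φ(0)` and `φ(1)` are differences of Gaussian differential entropies, computed from
`∫ f_v = 1` and `∫ y² f_v = v`, so `φ(0) = 0 < ψ(0)` and `ψ(1) = 0 < φ(1)`; the intermediate
value theorem then gives the balancing `λ`, once `φ` is continuous. For continuity, a mixture
`g = λ f₁ + (1 - λ) f₀` lies between `f₀` and `f₁`, so `|g log g| ≤ (f₀ + f₁)(|log f₀| + |log f₁|)`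
uniformly in `λ ∈ [0,1]`; for Gaussians `|log f_v(y)|` grows like `y²`, so this bound is integrable
and dominated convergence applies.
-/

open ProbabilityTheory Real Set

lemma abs_mul_log_le_of_mem_uIcc {a b g : ℝ} (ha : 0 < a) (hb : 0 < b) (hg : g ∈ uIcc a b) :
    |g * log g| ≤ (a + b) * (|log a| + |log b|) := by
  have hg₀ : 0 < g := (lt_min ha hb).trans_le hg.1
  have hlog : |log g| ≤ max |log a| |log b| := by
    rcases mem_uIcc.1 hg with ⟨hag, hgb⟩ | ⟨hbg, hga⟩
    · exact abs_le_max_abs_abs (log_le_log ha hag) (log_le_log hg₀ hgb)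
    · exact max_comm |log a| _ ▸ abs_le_max_abs_abs (log_le_log hb hbg) (log_le_log hg₀ hga)
  rw [abs_mul, abs_of_pos hg₀]
  gcongr
  · exact hg.2.trans (max_le_add_of_nonneg ha.le hb.le)
  · exact hlog.trans (max_le_add_of_nonneg (abs_nonneg _) (abs_nonneg _))

lemma convexCombo_mem_uIcc {a b l : ℝ} (hl : l ∈ Icc (0 : ℝ) 1) :
    l * a + (1 - l) * b ∈ uIcc a b := by
  rw [← segment_eq_uIcc]
  exact ⟨l, 1 - l, hl.1, sub_nonneg.2 hl.2, by ring, rfl⟩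

theorem continuousOn_integral_convexCombo_mul_log {α : Type*} [MeasurableSpace α] {μ : Measure α}
    {f₀ f₁ : α → ℝ} (hf₀ : Measurable f₀) (hf₁ : Measurable f₁) (h₀ : ∀ x, 0 < f₀ x)
    (h₁ : ∀ x, 0 < f₁ x)
    (hint : Integrable (fun x => (f₁ x + f₀ x) * (|log (f₁ x)| + |log (f₀ x)|)) μ) :
    ContinuousOn (fun l => ∫ x, (l * f₁ x + (1 - l) * f₀ x) * log (l * f₁ x + (1 - l) * f₀ x) ∂μ)
      (Icc 0 1) := by
  refine continuousOn_of_dominated (fun l _ => ?_) (fun l hl => ?_) hint (ae_of_all _ fun x => ?_)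
  · exact (continuous_mul_log.measurable.comp (by fun_prop)).aestronglyMeasurable
  · exact ae_of_all _ fun x => abs_mul_log_le_of_mem_uIcc (h₁ x) (h₀ x) (convexCombo_mem_uIcc hl)
  · exact (continuous_mul_log.comp (by fun_prop)).continuousOn

lemma integral_mul_logb {α : Type*} [MeasurableSpace α] {μ : Measure α} (b : ℝ) (f : α → ℝ) :
    ∫ x, f x * logb b (f x) ∂μ = (∫ x, f x * log (f x) ∂μ) / log b := by
  simp_rw [logb, mul_div_assoc']
  exact integral_div _ _

lemma gpdf_pos {v : ℝ} (hv : 0 < v) (y : ℝ) : 0 < gpdf v y := by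
  unfold gpdf; positivity

@[fun_prop]
lemma continuous_gpdf (v : ℝ) : Continuous (gpdf v) := by
  unfold gpdf; fun_prop

@[fun_prop]
lemma measurable_gpdf (v : ℝ) : Measurable (gpdf v) :=
  (continuous_gpdf v).measurable

lemma gpdf_eq_gaussianPDFReal {v : ℝ} (hv : 0 ≤ v) : gpdf v = gaussianPDFReal 0 v.toNNReal := by
  ext y
  simp [gpdf, gaussianPDFReal, Real.coe_toNNReal _ hv]

lemma integrable_gpdf (v : ℝ) : Integrable (gpdf v) := by
  rcases le_or_gt 0 v with hv | hv
  · rw [gpdf_eq_gaussianPDFReal hv]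
    exact integrable_gaussianPDFReal _ _
  · have hzero : gpdf v = 0 := by
      ext y
      simp [gpdf, sqrt_eq_zero'.2 (by nlinarith [pi_pos] : 2 * π * v ≤ 0)]
    exact hzero ▸ integrable_zero _ _ _

lemma integral_gpdf {v : ℝ} (hv : 0 < v) : ∫ y, gpdf v y = 1 := by
  rw [gpdf_eq_gaussianPDFReal hv.le]
  exact integral_gaussianPDFReal_eq_one _ (by simpa using hv)

lemma integrable_sq_mul_gpdf {v : ℝ} (hv : 0 < v) : Integrable (fun y => y ^ 2 * gpdf v y) := by
  have h := (memLp_id_gaussianReal (μ := 0) (v := v.toNNReal) 2).integrable_sq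
  rw [gaussianReal_of_var_ne_zero _ (by simpa using hv), integrable_withDensity_iff_integrable_smul'
    (measurable_gaussianPDF _ _) (ae_of_all _ fun _ => gaussianPDF_lt_top)] at h
  simpa [gpdf_eq_gaussianPDFReal hv.le, gaussianPDF, gaussianPDFReal_nonneg, mul_comm] using h

lemma integral_sq_mul_gpdf {v : ℝ} (hv : 0 < v) : ∫ y, y ^ 2 * gpdf v y = v := by
  have h := variance_id_gaussianReal (μ := 0) (v := v.toNNReal)
  rw [variance_of_integral_eq_zero aemeasurable_id integral_id_gaussianReal,
    integral_gaussianReal_eq_integral_smul (by simpa using hv)] at h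
  simpa [gpdf_eq_gaussianPDFReal hv.le, mul_comm, hv.le] using h

lemma log_gpdf {v : ℝ} (hv : 0 < v) (y : ℝ) :
    log (gpdf v y) = -(log (2 * π * v) / 2 + y ^ 2 / (2 * v)) := by
  rw [gpdf, log_mul (by positivity) (exp_pos _).ne', log_inv, log_sqrt (by positivity), log_exp]
  ring

lemma abs_log_gpdf_le {v : ℝ} (hv : 0 < v) (y : ℝ) :
    |log (gpdf v y)| ≤ |log (2 * π * v)| / 2 + y ^ 2 / (2 * v) := by
  rw [log_gpdf hv, abs_neg]
  refine (abs_add_le _ _).trans (le_of_eq ?_)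
  rw [abs_div, abs_two, abs_of_nonneg (by positivity : 0 ≤ y ^ 2 / (2 * v))]

lemma integral_gpdf_mul_log_gpdf {v : ℝ} (hv : 0 < v) :
    ∫ y, gpdf v y * log (gpdf v y) = -(1 / 2) * log (2 * π * exp 1 * v) := by
  have hpt : ∀ y, gpdf v y * log (gpdf v y)
      = -(1 / 2) * log (2 * π * v) * gpdf v y - 1 / (2 * v) * (y ^ 2 * gpdf v y) := fun y => by
    rw [log_gpdf hv]; ring
  simp_rw [hpt]
  rw [integral_sub ((integrable_gpdf v).const_mul _) ((integrable_sq_mul_gpdf hv).const_mul _),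
    integral_const_mul, integral_const_mul, integral_gpdf hv, integral_sq_mul_gpdf hv,
    mul_right_comm _ (exp 1), log_mul (by positivity) (exp_pos 1).ne', log_exp]
  field_simp
  ring

lemma integrable_gpdf_add_mul_abs_log {v₀ v₁ : ℝ} (h₀ : 0 < v₀) (h₁ : 0 < v₁) :
    Integrable (fun y => (gpdf v₀ y + gpdf v₁ y) * (|log (gpdf v₀ y)| + |log (gpdf v₁ y)|)) := by
  set C := |log (2 * π * v₀)| / 2 + |log (2 * π * v₁)| / 2 with hC
  set D := 1 / (2 * v₀) + 1 / (2 * v₁)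
  have hdom : Integrable (fun y => C * (gpdf v₀ y + gpdf v₁ y) +
      D * (y ^ 2 * gpdf v₀ y + y ^ 2 * gpdf v₁ y)) :=
    (((integrable_gpdf v₀).add (integrable_gpdf v₁)).const_mul C).add
      (((integrable_sq_mul_gpdf h₀).add (integrable_sq_mul_gpdf h₁)).const_mul D)
  refine hdom.mono' (Measurable.aestronglyMeasurable (by fun_prop)) (ae_of_all _ fun y => ?_)
  have hlog₀ := abs_log_gpdf_le h₀ y
  have hlog₁ := abs_log_gpdf_le h₁ y
  rw [norm_of_nonneg (mul_nonneg (add_pos (gpdf_pos h₀ y) (gpdf_pos h₁ y)).le (by positivity))]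
  have hD : D * y ^ 2 = y ^ 2 / (2 * v₀) + y ^ 2 / (2 * v₁) := by ring
  calc _ ≤ (gpdf v₀ y + gpdf v₁ y) * (C + D * y ^ 2) :=
        mul_le_mul_of_nonneg_left (by linarith [hC]) (add_pos (gpdf_pos h₀ y) (gpdf_pos h₁ y)).le
    _ = _ := by ring

/-- existence of the balancing transmission probability for Gaussian
inputs on AWGN links: with
`φ(λ) = −∫ (λ·f_{P2+σ2²} + (1−λ)·f_{σ2²})·log2(λ·f_{P2+σ2²} + (1−λ)·f_{σ2²})
        − (1/2)·log2(2πe·σ2²)`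
and `ψ(λ) = (1/2)·log2(1 + P1/σ1²)·(1 − λ)`, the function `φ` is continuous on `[0,1]`,
`φ(0) = 0`, `φ(1) = (1/2)·log2(1 + P2/σ2²)`, and there exists `λ ∈ (0,1)` with
`ψ(λ) = φ(λ)`. -/
theorem gaussian_balancing_probability_exists
    (σ1sq σ2sq P1 P2 : ℝ) (hσ1 : 0 < σ1sq) (hσ2 : 0 < σ2sq)
    (hP1 : 0 < P1) (hP2 : 0 < P2)
    (φ ψ : ℝ → ℝ)
    (hφ : ∀ l : ℝ, φ l =
      -(∫ y : ℝ, (l * gpdf (P2 + σ2sq) y + (1 - l) * gpdf σ2sq y) *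
          Real.logb 2 (l * gpdf (P2 + σ2sq) y + (1 - l) * gpdf σ2sq y))
        - (1/2) * Real.logb 2 (2 * Real.pi * Real.exp 1 * σ2sq))
    (hψ : ∀ l : ℝ, ψ l = (1/2) * Real.logb 2 (1 + P1 / σ1sq) * (1 - l)) :
    ContinuousOn φ (Set.Icc (0:ℝ) 1) ∧
    φ 0 = 0 ∧
    φ 1 = (1/2) * Real.logb 2 (1 + P2 / σ2sq) ∧
    ∃ l ∈ Set.Ioo (0:ℝ) 1, ψ l = φ l := by
  have hv : 0 < P2 + σ2sq := by positivity
  simp_rw [integral_mul_logb] at hφ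
  have hφ_cont : ContinuousOn φ (Icc 0 1) := by
    rw [funext hφ]
    exact ((continuousOn_integral_convexCombo_mul_log (measurable_gpdf _) (measurable_gpdf _)
      (gpdf_pos hσ2) (gpdf_pos hv) (integrable_gpdf_add_mul_abs_log hv hσ2)).div_const _).neg.sub
      continuousOn_const
  have hφ0 : φ 0 = 0 := by
    simp only [hφ, zero_mul, sub_zero, one_mul, zero_add, integral_gpdf_mul_log_gpdf hσ2, logb]
    ring
  have hφ1 : φ 1 = (1/2) * logb 2 (1 + P2 / σ2sq) := by
    have hratio : 1 + P2 / σ2sq = (2 * π * exp 1 * (P2 + σ2sq)) / (2 * π * exp 1 * σ2sq) := by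
      field_simp; ring
    simp only [hφ, one_mul, sub_self, zero_mul, add_zero, integral_gpdf_mul_log_gpdf hv, hratio]
    rw [logb_div (by positivity) (by positivity)]
    unfold logb
    ring
  have hlogb_pos : ∀ {x : ℝ}, 0 < x → 0 < logb 2 (1 + x) := fun hx =>
    logb_pos one_lt_two (lt_add_of_pos_right 1 hx)
  have h0 : 0 < ψ 0 - φ 0 := by
    rw [hψ, hφ0, sub_zero, sub_zero, mul_one]
    exact mul_pos one_half_pos (hlogb_pos (div_pos hP1 hσ1))
  have h1 : ψ 1 - φ 1 < 0 := by
    rw [hψ, hφ1, sub_self, mul_zero, zero_sub, neg_neg_iff_pos]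
    exact mul_pos one_half_pos (hlogb_pos (div_pos hP2 hσ2))
  have hψ_cont : ContinuousOn ψ (Icc 0 1) := by
    rw [funext hψ]; fun_prop
  obtain ⟨l, hl, hl_eq⟩ := intermediate_value_Ioo' zero_le_one (hψ_cont.sub hφ_cont) ⟨h1, h0⟩
  exact ⟨hφ_cont, hφ0, hφ1, l, hl, sub_eq_zero.1 hl_eq⟩
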